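/- Let |T⟩ = Rz(iκ)₁ Rz(iκ)₃ |Cl₄⟩ be a 4-qubit linear cluster state with imaginary-angle z-rotations (κ = ln λ, 0 < λ < 1) on qubits 1 and 3. Projecting qubits 2 and 3 onto |−⟩ and |±⟩ respectively (outcome m₂ = 1 on qubit 2) yields, up to local unitaries and normalization, the state CZ₁₄ |++⟩₁₄; i.e., the imaginary rotation on the remaining qubit is completely cancelled. If instead m₂ = 0, the resulting state is CZ₁₄ Rz(2iκ)₁ |++⟩₁₄ up to local unitaries, i.e., the effective imaginary angle doubles. -/

import Mathlib

/-!
Pairing qubit 2 with ⟨±| sums the CZ phases `(-1)^(j(i+k))` against `(-1)^(m₂ j)`, which forces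
`k = i + m₂ (mod 2)`: the projected amplitude is `f(i) f(i+m₂) (-1)^((i+m₂)(m₃+l)) / 4`.
For `m₂ = 1` the two imaginary rotations meet with opposite signs, `f(i) f(i+1) = 1`; for `m₂ = 0`
they add up, `f(i)² = f(2κ)(i)`. The remaining sign is CZ₁₄ seen through the signed permutation
`l ↦ l + m₃` on qubit 4.
-/

open Matrix

noncomputable section

/-- Amplitude factor of Rz(iκ)|+⟩-type qubits: Rz(iκ) = diag(e^{κ/2}, e^{−κ/2}). -/
def f (κ : ℝ) : Fin 2 → ℂ := fun i =>
  Complex.exp (if i = 0 then ((κ / 2 : ℝ) : ℂ) else ((-(κ / 2) : ℝ) : ℂ))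

/-- Amplitudes of |T⟩ = Rz(iκ)₁ Rz(iκ)₃ CZ₁₂CZ₂₃CZ₃₄ |++++⟩. -/
def T (κ : ℝ) (i j k l : Fin 2) : ℂ :=
  f κ i * f κ k *
    (-1 : ℂ) ^ ((i : ℕ) * (j : ℕ) + (j : ℕ) * (k : ℕ) + (k : ℕ) * (l : ℕ)) / 4

/-- |+⟩ (s = 0) and |−⟩ (s = 1) amplitudes. -/
def pm (s i : Fin 2) : ℂ := ((Real.sqrt 2 : ℂ))⁻¹ * (-1 : ℂ) ^ ((s : ℕ) * (i : ℕ))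

namespace Matrix

variable {n R : Type*} [DecidableEq n] [Fintype n] [CommRing R]

lemma permMatrix_mem_unitaryGroup [StarRing R] (σ : Equiv.Perm n) :
    σ.permMatrix R ∈ unitaryGroup n R := by
  rw [mem_unitaryGroup_iff', star_eq_conjTranspose, conjTranspose_permMatrix, ← permMatrix_mul,
    mul_inv_cancel, permMatrix_one]

lemma diagonal_mem_unitaryGroup [StarRing R] {d : n → R} (hd : ∀ i, star (d i) * d i = 1) :
    diagonal d ∈ unitaryGroup n R := by
  rw [mem_unitaryGroup_iff', star_eq_conjTranspose, diagonal_conjTranspose, diagonal_mul_diagonal]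
  exact diagonal_eq_one.mpr (funext hd)

lemma diagonal_mul_permMatrix_mulVec (d v : n → R) (σ : Equiv.Perm n) :
    (diagonal d * σ.permMatrix R) *ᵥ v = fun i => d i * v (σ i) := by
  ext i
  rw [← mulVec_mulVec, permMatrix_mulVec, mulVec_diagonal, Function.comp_apply]

lemma sum_sum_one_mul_mul (B : Matrix n n R) (X : n → n → R) (i l : n) :
    ∑ i', ∑ l', (1 : Matrix n n R) i i' * B l l' * X i' l' = (B *ᵥ X i) l := by
  simp [one_apply, mulVec, dotProduct, ite_mul]

end Matrix

lemma neg_one_pow_val_add_mul {R : Type*} [Ring R] (a b : Fin 2) (n : ℕ) :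
    (-1 : R) ^ ((a + b : Fin 2) * n : ℕ) = (-1) ^ (((a : ℕ) + b) * n) := by
  rw [Fin.val_add, pow_mul, pow_mul, ← neg_one_pow_eq_pow_mod_two]

lemma f_mul_f_add_one (κ : ℝ) (i : Fin 2) : f κ i * f κ (i + 1) = 1 := by
  fin_cases i <;> simp [f, ← Complex.exp_add]

lemma f_mul_self (κ : ℝ) (i : Fin 2) : f κ i * f κ i = f (2 * κ) i := by
  fin_cases i <;> simp [f, ← Complex.exp_add]; ring_nf

lemma star_pm (s j : Fin 2) : star (pm s j) = pm s j := by
  simp [pm]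

lemma sum_pm_mul_neg_one_pow (s : Fin 2) (n : ℕ) :
    ∑ j, pm s j * (-1 : ℂ) ^ ((j : ℕ) * n) =
      if Even ((s : ℕ) + n) then (Real.sqrt 2 : ℂ) else 0 := by
  have h2 : ((Real.sqrt 2 : ℂ)) ^ 2 = 2 := by
    rw [← Complex.ofReal_pow, Real.sq_sqrt zero_le_two]; norm_num
  simp only [Fin.sum_univ_two, pm, Fin.val_zero, Fin.val_one, mul_zero, zero_mul, pow_zero,
    mul_one, one_mul]
  rw [mul_assoc, ← mul_one_add, ← pow_add]
  split_ifs with h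
  · rw [h.neg_one_pow]; field_simp; rw [h2]; norm_num
  · rw [(Nat.not_even_iff_odd.mp h).neg_one_pow]; simp

lemma even_val_add_iff (a b c : Fin 2) : Even ((a : ℕ) + (b + c)) ↔ c = b + a := by
  revert a b c; decide

lemma sum_sum_pm_mul_T (κ : ℝ) (m₂ m₃ i l : Fin 2) :
    ∑ j, ∑ k, star (pm m₂ j) * star (pm m₃ k) * T κ i j k l =
      f κ i * f κ (i + m₂) * (-1) ^ (((i + m₂ : Fin 2) : ℕ) * ((m₃ : ℕ) + l)) / 4 := by
  have hsplit : ∀ j k : Fin 2, star (pm m₂ j) * star (pm m₃ k) * T κ i j k l =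
      pm m₃ k * f κ i * f κ k * (-1) ^ ((k : ℕ) * l) / 4 *
        (pm m₂ j * (-1 : ℂ) ^ ((j : ℕ) * ((i : ℕ) + k))) := by
    intro j k
    rw [star_pm, star_pm, T]
    ring
  simp_rw [hsplit]
  rw [Finset.sum_comm]
  simp_rw [← Finset.mul_sum, sum_pm_mul_neg_one_pow, even_val_add_iff, mul_ite, mul_zero,
    Finset.sum_ite_eq', Finset.mem_univ, if_true, pm]
  field_simp
  ring

theorem bub_chain_walk_step_general (κ : ℝ) (m₃ : Fin 2) :
    let res : Fin 2 → Fin 2 → Fin 2 → ℂ := fun m₂ i l =>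
      ∑ j : Fin 2, ∑ k : Fin 2, star (pm m₂ j) * star (pm m₃ k) * T κ i j k l
    -- outcome m₂ = 1 on qubit 2: perfect CZ₁₄|++⟩ up to local unitaries and scalar
    (∃ (c : ℂ) (A B : Matrix (Fin 2) (Fin 2) ℂ), c ≠ 0 ∧ Aᴴ * A = 1 ∧ Bᴴ * B = 1 ∧
      ∀ i l : Fin 2, res 1 i l =
        c * ∑ i' : Fin 2, ∑ l' : Fin 2,
          A i i' * B l l' * ((-1 : ℂ) ^ ((i' : ℕ) * (l' : ℕ)) / 2)) ∧
    -- outcome m₂ = 0: CZ₁₄ Rz(2iκ)₁|++⟩ up to local unitaries and scalar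
    (∃ (c : ℂ) (A B : Matrix (Fin 2) (Fin 2) ℂ), c ≠ 0 ∧ Aᴴ * A = 1 ∧ Bᴴ * B = 1 ∧
      ∀ i l : Fin 2, res 0 i l =
        c * ∑ i' : Fin 2, ∑ l' : Fin 2,
          A i i' * B l l' * (f (2 * κ) i' * (-1 : ℂ) ^ ((i' : ℕ) * (l' : ℕ)) / 2)) := by
  intro res
  let σ := Equiv.addRight m₃
  let sign : Fin 2 → ℂ := fun l => (-1) ^ ((m₃ : ℕ) + l)
  have hsign : ∀ l, star (sign l) * sign l = 1 := fun l => by simp [sign, ← mul_pow]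
  refine ⟨⟨1 / 2, 1, diagonal sign * σ.permMatrix ℂ, by norm_num, by simp,
      mem_unitaryGroup_iff'.mp
        (mul_mem (diagonal_mem_unitaryGroup hsign) (permMatrix_mem_unitaryGroup σ)),
      fun i l => ?_⟩,
    ⟨1 / 2, 1, σ.permMatrix ℂ, by norm_num, by simp,
      mem_unitaryGroup_iff'.mp (permMatrix_mem_unitaryGroup σ), fun i l => ?_⟩⟩
  · simp only [res, sum_sum_pm_mul_T, sum_sum_one_mul_mul, diagonal_mul_permMatrix_mulVec,
      σ, Equiv.coe_addRight]
    rw [f_mul_f_add_one, neg_one_pow_val_add_mul, mul_comm (i : ℕ), neg_one_pow_val_add_mul,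
      Fin.val_one]
    ring
  · simp only [res, sum_sum_pm_mul_T, sum_sum_one_mul_mul, permMatrix_mulVec,
      Function.comp_apply, σ, Equiv.coe_addRight, add_zero]
    rw [f_mul_self, mul_comm (i : ℕ) (l + m₃ : Fin 2), neg_one_pow_val_add_mul]
    ring

/-- Projecting qubits 2 and 3 of |T⟩ = Rz(iκ)₁Rz(iκ)₃|Cl₄⟩ onto |−⟩ (outcome m₂ = 1)
and |±⟩ respectively yields, up to local unitaries and a nonzero scalar, CZ₁₄|++⟩₁₄:
the imaginary rotation is cancelled.  If instead qubit 2 gives |+⟩ (m₂ = 0), the result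
is CZ₁₄ Rz(2iκ)₁ |++⟩₁₄ up to local unitaries: the imaginary angle doubles. -/
theorem bub_chain_walk_step (κ : ℝ) (lam : ℝ) (hlam0 : 0 < lam) (hlam1 : lam < 1)
    (hκ : κ = Real.log lam) (m₃ : Fin 2) :
    let res : Fin 2 → Fin 2 → Fin 2 → ℂ := fun m₂ i l =>
      ∑ j : Fin 2, ∑ k : Fin 2, star (pm m₂ j) * star (pm m₃ k) * T κ i j k l
    -- outcome m₂ = 1 on qubit 2: perfect CZ₁₄|++⟩ up to local unitaries and scalar
    (∃ (c : ℂ) (A B : Matrix (Fin 2) (Fin 2) ℂ), c ≠ 0 ∧ Aᴴ * A = 1 ∧ Bᴴ * B = 1 ∧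
      ∀ i l : Fin 2, res 1 i l =
        c * ∑ i' : Fin 2, ∑ l' : Fin 2,
          A i i' * B l l' * ((-1 : ℂ) ^ ((i' : ℕ) * (l' : ℕ)) / 2)) ∧
    -- outcome m₂ = 0: CZ₁₄ Rz(2iκ)₁|++⟩ up to local unitaries and scalar
    (∃ (c : ℂ) (A B : Matrix (Fin 2) (Fin 2) ℂ), c ≠ 0 ∧ Aᴴ * A = 1 ∧ Bᴴ * B = 1 ∧
      ∀ i l : Fin 2, res 0 i l =
        c * ∑ i' : Fin 2, ∑ l' : Fin 2,
          A i i' * B l l' * (f (2 * κ) i' * (-1 : ℂ) ^ ((i' : ℕ) * (l' : ℕ)) / 2)) :=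
  bub_chain_walk_step_general κ m₃

end
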